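/- The function K ↦ trace((I - K H) P (I - K H)ᵀ + K R Kᵀ) over n×m real matrices attains its minimum at K* = P Hᵀ S^{-1}, where S = H P Hᵀ + R; that is, for every K, trace of the Joseph form at K is at least its value at K*. -/

import Mathlib

open Matrix

lemma psd_trace_nonneg {n : ℕ} {M : Matrix (Fin n) (Fin n) ℝ}
    (hM : M.PosSemidef) : 0 ≤ M.trace := by
  rw [Matrix.trace]
  apply Finset.sum_nonneg
  intro i _
  have := hM.2 (Finsupp.single i 1)
  simpa [Matrix.diag] using this

lemma joseph_key {n m : ℕ} (P : Matrix (Fin n) (Fin n) ℝ)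
    (A : Matrix (Fin m) (Fin n) ℝ) (S : Matrix (Fin m) (Fin m) ℝ)
    (K Ks : Matrix (Fin n) (Fin m) ℝ)
    (h1 : Ks * S = Aᵀ) (h2 : S * Ksᵀ = A) (h3 : Ks * A = Aᵀ * Ksᵀ) :
    P - K * A - Aᵀ * Kᵀ + K * S * Kᵀ
      = (P - Ks * A - Aᵀ * Ksᵀ + Ks * S * Ksᵀ) + (K - Ks) * S * (K - Ks)ᵀ := by
  have e1 : K * S * Ksᵀ = K * A := by rw [Matrix.mul_assoc, h2]
  have e2 : Ks * S * Kᵀ = Aᵀ * Kᵀ := by rw [h1]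
  have e3 : Ks * S * Ksᵀ = Ks * A := by rw [Matrix.mul_assoc, h2]
  have expand2 : (K - Ks) * S * (K - Ks)ᵀ
      = K * S * Kᵀ - K * S * Ksᵀ - Ks * S * Kᵀ + Ks * S * Ksᵀ := by
    rw [transpose_sub, Matrix.sub_mul, Matrix.sub_mul, Matrix.mul_sub, Matrix.mul_sub]
    abel
  rw [expand2, e1, e2, e3, h3]
  abel

/-- The trace of the Joseph form is minimized at the optimal Kalman gain
`K* = P Hᵀ S⁻¹` with `S = H P Hᵀ + R`. -/
theorem trace_joseph_form_ge {n m : ℕ} (P : Matrix (Fin n) (Fin n) ℝ)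
    (H : Matrix (Fin m) (Fin n) ℝ) (R : Matrix (Fin m) (Fin m) ℝ)
    (hP : P.PosSemidef) (hR : R.PosDef)
    (Kstar : Matrix (Fin n) (Fin m) ℝ) (hKstar : Kstar = P * Hᵀ * (H * P * Hᵀ + R)⁻¹) :
    ∀ K : Matrix (Fin n) (Fin m) ℝ,
      ((1 - Kstar * H) * P * (1 - Kstar * H)ᵀ + Kstar * R * Kstarᵀ).trace
        ≤ ((1 - K * H) * P * (1 - K * H)ᵀ + K * R * Kᵀ).trace := by
  intro K
  set S : Matrix (Fin m) (Fin m) ℝ := H * P * Hᵀ + R with hS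
  have hPt : Pᵀ = P := by
    have := hP.1
    simpa [Matrix.conjTranspose_eq_transpose_of_trivial, Matrix.IsHermitian] using this
  have hRt : Rᵀ = R := by
    have := hR.1
    simpa [Matrix.conjTranspose_eq_transpose_of_trivial, Matrix.IsHermitian] using this
  have hHPH : (H * P * Hᵀ).PosSemidef := by
    have := hP.mul_mul_conjTranspose_same H
    simpa [Matrix.conjTranspose_eq_transpose_of_trivial] using this
  have hSpd : S.PosDef := by
    rw [hS]
    exact Matrix.PosDef.posSemidef_add hHPH hR
  have hSt : Sᵀ = S := by
    rw [hS]
    simp [transpose_add, transpose_mul, hPt, hRt, Matrix.mul_assoc]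
  have hdet : IsUnit S.det := isUnit_iff_isUnit_det S |>.1 hSpd.isUnit
  have hinv : S⁻¹ * S = 1 := Matrix.nonsing_inv_mul S hdet
  have hinvt : (S⁻¹)ᵀ = S⁻¹ := by
    rw [Matrix.transpose_nonsing_inv, hSt]
  have h1 : Kstar * S = (H * P)ᵀ := by
    rw [hKstar, Matrix.mul_assoc, hinv, Matrix.mul_one, transpose_mul, hPt]
  have h2 : S * Kstarᵀ = H * P := by
    have := congrArg Matrix.transpose h1
    rw [transpose_mul, hSt, transpose_transpose] at this
    exact this
  have h3 : Kstar * (H * P) = (H * P)ᵀ * Kstarᵀ := by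
    have hsym : (Kstar * (H * P))ᵀ = Kstar * (H * P) := by
      rw [hKstar]
      simp [transpose_mul, transpose_transpose, hPt, hinvt, Matrix.mul_assoc]
    rw [← hsym, transpose_mul]
  have expand : ∀ L : Matrix (Fin n) (Fin m) ℝ,
      (1 - L * H) * P * (1 - L * H)ᵀ + L * R * Lᵀ
        = P - L * (H * P) - (H * P)ᵀ * Lᵀ + L * S * Lᵀ := by
    intro L
    rw [hS]
    simp only [transpose_sub, transpose_mul, transpose_one, hPt,
      Matrix.sub_mul, Matrix.mul_sub, Matrix.add_mul, Matrix.mul_add,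
      Matrix.one_mul, Matrix.mul_one, Matrix.mul_assoc]
    abel
  rw [expand K, expand Kstar,
    joseph_key P (H * P) S K Kstar h1 h2 h3]
  have hpsd : ((K - Kstar) * S * (K - Kstar)ᵀ).PosSemidef := by
    have := hSpd.posSemidef.mul_mul_conjTranspose_same (K - Kstar)
    simpa [Matrix.conjTranspose_eq_transpose_of_trivial] using this
  rw [Matrix.trace_add (P - Kstar * (H * P) - (H * P)ᵀ * Kstarᵀ + Kstar * S * Kstarᵀ)
    ((K - Kstar) * S * (K - Kstar)ᵀ)]
  exact le_add_of_nonneg_right (psd_trace_nonneg hpsd)
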